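/- arXiv:1112.0650 — 4 statements merged into one kernel-verified Lean document; each statement's English description precedes it below -/
import Mathlib

section
/- (Corollary 3.2, pointwise form) With the pointwise totally-real model below, for any integer k with 2 ≤ k ≤ n one has ‖H‖² ≥ Θ_k − c/4. -/
open RealInnerProductSpace

lemma exists_subset_sum_le {ι : Type*} [DecidableEq ι] (t : ι → ℝ) (μ : ℝ) :
    ∀ (N : ℕ) (s : Finset ι), s.card = N → ∀ m ≤ N, (∑ j ∈ s, t j) ≤ N * μ →
      ∃ A ⊆ s, A.card = m ∧ (∑ j ∈ A, t j) ≤ m * μ := by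
  intro N
  induction N with
  | zero =>
    intro s hs m hm hsum
    interval_cases m
    exact ⟨∅, Finset.empty_subset s, rfl, by simpa using hsum⟩
  | succ N ih =>
    intro s hs m hm hsum
    rcases eq_or_lt_of_le hm with rfl | hmN
    · exact ⟨s, Finset.Subset.refl s, hs, hsum⟩
    · have hm' : m ≤ N := Nat.lt_succ_iff.mp hmN
      have hne : s.Nonempty := Finset.card_pos.mp (by omega)
      obtain ⟨j, hjs, hjmax⟩ := Finset.exists_max_image s t hne
      have hcard : (s.erase j).card = N := by
        rw [Finset.card_erase_of_mem hjs, hs]; omega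
      have hsum' : (∑ i ∈ s.erase j, t i) ≤ N * μ := by
        by_cases hjμ : μ ≤ t j
        · have : (∑ i ∈ s.erase j, t i) = (∑ i ∈ s, t i) - t j := by
            rw [← Finset.sum_erase_add s t hjs]; ring
          rw [this]
          push_cast [hs] at hsum ⊢
          nlinarith
        · have : (∑ i ∈ s.erase j, t i) ≤ (s.erase j).card • t j :=
            Finset.sum_le_card_nsmul _ _ _ (fun i hi => hjmax i (Finset.mem_of_mem_erase hi))
          rw [hcard, nsmul_eq_mul] at this
          nlinarith [this]
      obtain ⟨A, hA, hAcard, hAsum⟩ := ih (s.erase j) hcard m hm' hsum'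
      exact ⟨A, hA.trans (Finset.erase_subset j s), hAcard, hAsum⟩
open RealInnerProductSpace

lemma bilin_bound {W E : Type*} [NormedAddCommGroup W] [InnerProductSpace ℝ W]
    [NormedAddCommGroup E] [InnerProductSpace ℝ E] {n : ℕ}
    (h : W →ₗ[ℝ] W →ₗ[ℝ] E) (b : OrthonormalBasis (Fin n) ℝ W)
    (x y : W) (hx : ‖x‖ ≤ 1) (hy : ‖y‖ ≤ 1) :
    ‖h x y‖ ≤ ∑ i, ∑ j, ‖h (b i) (b j)‖ := by
  have hrepr : ∀ (z : W) (i : Fin n), ‖z‖ ≤ 1 → |b.repr z i| ≤ 1 := by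
    intro z i hz
    rw [b.repr_apply_apply]
    calc |⟪b i, z⟫| ≤ ‖b i‖ * ‖z‖ := abs_real_inner_le_norm _ _
    _ ≤ 1 := by rw [b.orthonormal.1 i]; linarith
  conv_lhs => rw [← b.sum_repr x, ← b.sum_repr y]
  simp only [map_sum, map_smul, LinearMap.sum_apply, LinearMap.smul_apply, Finset.smul_sum]
  calc ‖∑ j, ∑ i, b.repr y j • b.repr x i • h (b i) (b j)‖
      ≤ ∑ j, ‖∑ i, b.repr y j • b.repr x i • h (b i) (b j)‖ := norm_sum_le _ _
    _ ≤ ∑ j, ∑ i, ‖b.repr y j • b.repr x i • h (b i) (b j)‖ :=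
        Finset.sum_le_sum (fun i _ => norm_sum_le _ _)
    _ ≤ ∑ j, ∑ i, ‖h (b i) (b j)‖ := by
        refine Finset.sum_le_sum fun j _ => Finset.sum_le_sum fun i _ => ?_
        rw [norm_smul, norm_smul]
        have h1 := hrepr x i hx
        have h2 := hrepr y j hy
        have h3 : (0:ℝ) ≤ ‖h (b i) (b j)‖ := norm_nonneg _
        rw [Real.norm_eq_abs, Real.norm_eq_abs]
        have h4 : |b.repr x i| * ‖h (b i) (b j)‖ ≤ ‖h (b i) (b j)‖ :=
          mul_le_of_le_one_left h3 h1
        calc |b.repr y j| * (|b.repr x i| * ‖h (b i) (b j)‖)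
            ≤ 1 * ‖h (b i) (b j)‖ := mul_le_mul h2 h4 (by positivity) zero_le_one
          _ = ‖h (b i) (b j)‖ := one_mul _
    _ = ∑ i, ∑ j, ‖h (b i) (b j)‖ := Finset.sum_comm


set_option maxHeartbeats 1000000 in
/-- **Corollary 3.2 (pointwise form).** For an `n`-dimensional totally-real submanifold of a
quaternionic space form of quaternionic sectional curvature `c`, modelled pointwise by the data
below, and any integer `k` with `2 ≤ k ≤ n`, one has `‖H‖² ≥ Θ_k − c/4`. -/
theorem totallyReal_kRicci_mean_curvature_ineq
    {W E : Type*} [NormedAddCommGroup W] [InnerProductSpace ℝ W] [FiniteDimensional ℝ W]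
    [NormedAddCommGroup E] [InnerProductSpace ℝ E]
    (n : ℕ) (hn : 2 ≤ n) (hdim : Module.finrank ℝ W = n)
    (c : ℝ)
    (h : W →ₗ[ℝ] W →ₗ[ℝ] E) (hsymm : ∀ x y : W, h x y = h y x)
    (K : W → W → ℝ)
    (hK : ∀ x y : W, K x y = c / 4 + ⟪h x x, h y y⟫ - ‖h x y‖ ^ 2)
    (b : OrthonormalBasis (Fin n) ℝ W)
    (H : E) (hH : H = (n : ℝ)⁻¹ • ∑ i, h (b i) (b i))
    (k : ℕ) (hk2 : 2 ≤ k) (hkn : k ≤ n)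
    (Θ : ℝ)
    (hΘ : Θ = (1 / ((k : ℝ) - 1)) * sInf {r : ℝ | ∃ v : Fin k → W,
        Orthonormal ℝ v ∧
          r = ∑ j ∈ Finset.univ.filter (fun j : Fin k => j ≠ ⟨0, by omega⟩),
                K (v ⟨0, by omega⟩) (v j)}) :
    ‖H‖ ^ 2 ≥ Θ - c / 4 := by
  have hk0 : 0 < k := by omega
  set z : Fin k := ⟨0, by omega⟩ with hz
  set S : Set ℝ := {r : ℝ | ∃ v : Fin k → W, Orthonormal ℝ v ∧
      r = ∑ j ∈ Finset.univ.filter (fun j : Fin k => j ≠ z), K (v z) (v j)} with hS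
  set C : ℝ := ∑ i, ∑ j, ‖h (b i) (b j)‖ with hC
  -- cardinality of the filter set
  have hFcard : (Finset.univ.filter (fun j : Fin k => j ≠ z)).card = k - 1 := by
    rw [Finset.filter_ne', Finset.card_erase_of_mem (Finset.mem_univ z), Finset.card_univ,
      Fintype.card_fin]
  -- Step A : S is bounded below
  have hBdd : BddBelow S := by
    refine ⟨((k : ℝ) - 1) * (c / 4 - 2 * C ^ 2), ?_⟩
    rintro r ⟨v, hv, rfl⟩
    have hub : ∀ x y : W, ‖x‖ = 1 → ‖y‖ = 1 → ‖h x y‖ ≤ C :=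
      fun x y hx hy => bilin_bound h b x y (le_of_eq hx) (le_of_eq hy)
    have hterm : ∀ j : Fin k, c / 4 - 2 * C ^ 2 ≤ K (v z) (v j) := by
      intro j
      rw [hK]
      have h1 : ‖h (v z) (v j)‖ ≤ C := hub _ _ (hv.1 z) (hv.1 j)
      have h2 : ‖h (v z) (v z)‖ ≤ C := hub _ _ (hv.1 z) (hv.1 z)
      have h3 : ‖h (v j) (v j)‖ ≤ C := hub _ _ (hv.1 j) (hv.1 j)
      have h4 : |⟪h (v z) (v z), h (v j) (v j)⟫| ≤ C ^ 2 := by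
        calc |⟪h (v z) (v z), h (v j) (v j)⟫| ≤ ‖h (v z) (v z)‖ * ‖h (v j) (v j)‖ :=
              abs_real_inner_le_norm _ _
          _ ≤ C ^ 2 := by nlinarith [norm_nonneg (h (v z) (v z)), norm_nonneg (h (v j) (v j))]
      have h5 : ‖h (v z) (v j)‖ ^ 2 ≤ C ^ 2 := by nlinarith [norm_nonneg (h (v z) (v j))]
      have := abs_le.mp h4
      linarith [this.1]
    calc ((k : ℝ) - 1) * (c / 4 - 2 * C ^ 2)
        = ∑ _j ∈ Finset.univ.filter (fun j : Fin k => j ≠ z), (c / 4 - 2 * C ^ 2) := by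
          rw [Finset.sum_const, hFcard, nsmul_eq_mul]
          congr 1
          push_cast [Nat.cast_sub (by omega : 1 ≤ k)]
          ring
      _ ≤ _ := Finset.sum_le_sum (fun j _ => hterm j)
  -- Step B : key sum inequality for the basis
  set f : Fin n → E := fun i => h (b i) (b i) with hf
  set T : Fin n → Fin n → ℝ := fun i j => ⟪f i, f j⟫ - ‖h (b i) (b j)‖ ^ 2 with hT
  have hnH : (n : ℝ) • H = ∑ i, f i := by
    rw [hH, smul_smul, mul_inv_cancel₀ (by positivity : (n:ℝ) ≠ 0), one_smul]
  have htotal : ∑ i, ∑ j, ⟪f i, f j⟫ = (n : ℝ) ^ 2 * ‖H‖ ^ 2 := by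
    have : ⟪∑ i, f i, ∑ j, f j⟫ = ∑ i, ∑ j, ⟪f i, f j⟫ := by
      rw [sum_inner]
      exact Finset.sum_congr rfl fun i _ => inner_sum _ _ _
    rw [← this, ← hnH, real_inner_self_eq_norm_sq, norm_smul]
    simp [mul_pow]
  have hcauchy : (n : ℝ) * ‖H‖ ^ 2 ≤ ∑ i, ‖f i‖ ^ 2 := by
    have h1 : ‖∑ i, f i‖ ≤ ∑ i, ‖f i‖ := norm_sum_le _ _
    have h2 : (∑ i, ‖f i‖) ^ 2 ≤ (n : ℝ) * ∑ i, ‖f i‖ ^ 2 := by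
      simpa using sq_sum_le_card_mul_sum_sq (s := Finset.univ) (f := fun i => ‖f i‖)
    have h3 : ‖∑ i, f i‖ ^ 2 ≤ (∑ i, ‖f i‖) ^ 2 := by
      have := norm_nonneg (∑ i, f i)
      nlinarith [Finset.sum_nonneg (fun i (_ : i ∈ Finset.univ) => norm_nonneg (f i))]
    have h4 : ‖∑ i, f i‖ ^ 2 = (n : ℝ) ^ 2 * ‖H‖ ^ 2 := by
      rw [← hnH, norm_smul]
      simp [mul_pow]
    have hn1 : (1 : ℝ) ≤ (n : ℝ) := by exact_mod_cast Nat.one_le_of_lt hn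
    nlinarith [norm_nonneg H, sq_nonneg ‖H‖]
  have hkey : ∑ i, ∑ j ∈ Finset.univ.erase i, T i j ≤ (n : ℝ) * ((↑(n - 1) : ℝ) * ‖H‖ ^ 2) := by
    have hsplit : ∀ i : Fin n, ∑ j ∈ Finset.univ.erase i, ⟪f i, f j⟫
        = (∑ j, ⟪f i, f j⟫) - ‖f i‖ ^ 2 := by
      intro i
      rw [← Finset.sum_erase_add Finset.univ _ (Finset.mem_univ i), real_inner_self_eq_norm_sq]
      ring
    have hTle : ∀ i, ∑ j ∈ Finset.univ.erase i, T i j ≤ ∑ j ∈ Finset.univ.erase i, ⟪f i, f j⟫ := by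
      intro i
      refine Finset.sum_le_sum fun j _ => ?_
      simp only [hT]
      nlinarith [sq_nonneg ‖h (b i) (b j)‖]
    calc ∑ i, ∑ j ∈ Finset.univ.erase i, T i j
        ≤ ∑ i, ∑ j ∈ Finset.univ.erase i, ⟪f i, f j⟫ :=
          Finset.sum_le_sum fun i _ => hTle i
      _ = (∑ i, ∑ j, ⟪f i, f j⟫) - ∑ i, ‖f i‖ ^ 2 := by
          rw [← Finset.sum_sub_distrib]
          exact Finset.sum_congr rfl fun i _ => hsplit i
      _ ≤ (n : ℝ) ^ 2 * ‖H‖ ^ 2 - (n : ℝ) * ‖H‖ ^ 2 := by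
          rw [htotal]; linarith
      _ = (n : ℝ) * ((↑(n - 1) : ℝ) * ‖H‖ ^ 2) := by
          push_cast [Nat.cast_sub (by omega : 1 ≤ n)]
          ring
  -- Step C : choose i₀
  have hstepC : ∃ i₀ : Fin n, ∑ j ∈ Finset.univ.erase i₀, T i₀ j ≤ (↑(n - 1) : ℝ) * ‖H‖ ^ 2 := by
    have hne : (Finset.univ : Finset (Fin n)).Nonempty := by
      have : Nonempty (Fin n) := ⟨⟨0, by omega⟩⟩
      exact Finset.univ_nonempty
    have := Finset.exists_le_of_sum_le (f := fun i => ∑ j ∈ Finset.univ.erase i, T i j)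
      (g := fun _ => (↑(n - 1) : ℝ) * ‖H‖ ^ 2) hne ?_
    · obtain ⟨i₀, _, hi₀⟩ := this
      exact ⟨i₀, hi₀⟩
    · rw [Finset.sum_const, Finset.card_univ, Fintype.card_fin, nsmul_eq_mul]
      exact hkey
  obtain ⟨i₀, hi₀⟩ := hstepC
  -- Step D : choose the subset A
  have hcard_erase : (Finset.univ.erase i₀ : Finset (Fin n)).card = n - 1 := by
    rw [Finset.card_erase_of_mem (Finset.mem_univ i₀), Finset.card_univ, Fintype.card_fin]
  obtain ⟨A, hAsub, hAcard, hAsum⟩ := exists_subset_sum_le (T i₀) (‖H‖ ^ 2) (n - 1)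
    (Finset.univ.erase i₀) hcard_erase (k - 1) (by omega) hi₀
  -- Step E : construct the orthonormal family
  have hk1 : 1 ≤ k := by omega
  set sig : Fin k → Fin n := fun j =>
    if hj : (j : ℕ) = 0 then i₀
    else ((A.equivFin.symm (Fin.cast hAcard.symm
      ⟨(j : ℕ) - 1, by have := j.isLt; omega⟩)) : Fin n)
    with hsig
  have hi₀A : i₀ ∉ A := fun hmem => (Finset.ne_of_mem_erase (hAsub hmem)) rfl
  have hsigmem : ∀ j : Fin k, (j : ℕ) ≠ 0 → sig j ∈ A := by
    intro j hj
    simp only [hsig, dif_neg hj]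
    exact Finset.coe_mem _
  have hsiginj : Function.Injective sig := by
    intro a b hab
    by_cases ha : (a : ℕ) = 0 <;> by_cases hb : (b : ℕ) = 0
    · exact Fin.ext (by omega)
    · exfalso
      apply hi₀A
      have hbA := hsigmem b hb
      have haeq : sig a = i₀ := by simp [hsig, ha]
      rwa [← hab, haeq] at hbA
    · exfalso
      apply hi₀A
      have haA := hsigmem a ha
      have hbeq : sig b = i₀ := by simp [hsig, hb]
      rwa [hab, hbeq] at haA
    · simp only [hsig, dif_neg ha, dif_neg hb] at hab
      have h2 := Subtype.coe_injective hab
      have h3 := A.equivFin.symm.injective h2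
      have h4 : (a : ℕ) - 1 = (b : ℕ) - 1 := by
        simpa [Fin.ext_iff] using h3
      exact Fin.ext (by omega)
  set v : Fin k → W := fun j => b (sig j) with hv
  have hvon : Orthonormal ℝ v := b.orthonormal.comp sig hsiginj
  have hvz : v z = b i₀ := by simp [hv, hsig, hz]
  -- reindex the sum
  have step1 : ∑ j ∈ Finset.univ.filter (fun j : Fin k => j ≠ z), K (v z) (v j)
      = ∑ a ∈ A, K (b i₀) (b a) := by
    refine Finset.sum_bij (fun j _ => sig j) ?_ ?_ ?_ ?_
    · intro j hj
      have hj' : (j : ℕ) ≠ 0 := by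
        simp only [Finset.mem_filter, Finset.mem_univ, true_and] at hj
        intro h0
        exact hj (Fin.ext (by simpa [hz] using h0))
      exact hsigmem j hj'
    · intro a₁ _ a₂ _ heq
      exact hsiginj heq
    · intro a ha
      have hmlt := (A.equivFin ⟨a, ha⟩).isLt
      refine ⟨⟨(A.equivFin ⟨a, ha⟩ : ℕ) + 1, by omega⟩, ?_, ?_⟩
      · simp only [Finset.mem_filter, Finset.mem_univ, true_and]
        intro heq
        have : ((A.equivFin ⟨a, ha⟩ : ℕ) + 1) = 0 := by
          simpa [hz, Fin.ext_iff] using heq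
        omega
      · have hne : (((A.equivFin ⟨a, ha⟩ : ℕ) + 1 : ℕ)) ≠ 0 := by omega
        simp only [hsig, dif_neg hne]
        have hcast : Fin.cast hAcard.symm
            ⟨(A.equivFin ⟨a, ha⟩ : ℕ) + 1 - 1, by have := hmlt; omega⟩
            = A.equivFin ⟨a, ha⟩ := by
          apply Fin.ext
          simp
        rw [hcast, Equiv.symm_apply_apply]
    · intro j hj
      rw [hvz]
  have hKT : ∀ a ∈ A, K (b i₀) (b a) = c / 4 + T i₀ a := by
    intro a _
    rw [hK]
    simp only [hT, hf]
    ring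
  have hr₀ : ∑ j ∈ Finset.univ.filter (fun j : Fin k => j ≠ z), K (v z) (v j)
      = (↑(k - 1) : ℝ) * (c / 4) + ∑ a ∈ A, T i₀ a := by
    rw [step1, Finset.sum_congr rfl hKT, Finset.sum_add_distrib, Finset.sum_const, hAcard,
      nsmul_eq_mul]
  -- Step F : conclude
  have hmem : (∑ j ∈ Finset.univ.filter (fun j : Fin k => j ≠ z), K (v z) (v j)) ∈ S :=
    ⟨v, hvon, rfl⟩
  have hinf_le : sInf S ≤ ((k : ℝ) - 1) * (c / 4 + ‖H‖ ^ 2) := by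
    have h1 := csInf_le hBdd hmem
    rw [hr₀] at h1
    have hcast : (↑(k - 1) : ℝ) = (k : ℝ) - 1 := by
      push_cast [Nat.cast_sub hk1]
      ring
    rw [hcast] at h1 hAsum
    nlinarith [hAsum]
  have hΘ' : Θ = (1 / ((k : ℝ) - 1)) * sInf S := hΘ
  have hkr : (0 : ℝ) < (k : ℝ) - 1 := by
    have : (2 : ℝ) ≤ (k : ℝ) := by exact_mod_cast hk2
    linarith
  have hfinal : Θ ≤ c / 4 + ‖H‖ ^ 2 := by
    rw [hΘ']
    calc (1 / ((k : ℝ) - 1)) * sInf S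
        ≤ (1 / ((k : ℝ) - 1)) * (((k : ℝ) - 1) * (c / 4 + ‖H‖ ^ 2)) :=
          mul_le_mul_of_nonneg_left hinf_le (by positivity)
      _ = c / 4 + ‖H‖ ^ 2 := by
          field_simp
  linarith
end

section
/- (Lemma 5.3, pointwise form) With the pointwise model of a submanifold of a quaternionic Kähler manifold below, assume P ∘ P = −cos²θ · id_W for some θ ∈ (0, π/2) (the proper slant condition) and that every vector of W^⊥ lies in the range of F (which holds for a proper slant submanifold of minimal codimension). Then ⟨Cu, Cv⟩ = cos²θ · ⟨u, v⟩ for all u, v ∈ W^⊥. -/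
/-!
Write `Jx = Px + Fx` for `x ∈ W`. Applying `J` once more and taking normal components gives
`C(Fx) = -F(Px)`, since `J²x = -x` has no normal part. As `J` is skew-adjoint, the slant condition
makes `P` scale inner products by `cos²θ`, and then `J` being an isometry makes `F` scale them by
`sin²θ`. Hence `⟪C(Fx), C(Fy)⟫ = ⟪F(Px), F(Py)⟫ = sin²θ cos²θ ⟪x, y⟫ = cos²θ ⟪Fx, Fy⟫`, which is
the claim because `F` is onto `W^⊥`.
-/

open RealInnerProductSpace

section

variable {V : Type*} [NormedAddCommGroup V] [InnerProductSpace ℝ V]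

namespace Submodule

variable (W : Submodule ℝ V) [W.HasOrthogonalProjection]

theorem inner_eq_inner_starProjection_add_inner_starProjection_orthogonal (a b : V) :
    ⟪a, b⟫ = ⟪W.starProjection a, W.starProjection b⟫ +
      ⟪Wᗮ.starProjection a, Wᗮ.starProjection b⟫ := by
  have h (K : Submodule ℝ V) [K.HasOrthogonalProjection] :
      ⟪K.starProjection a, K.starProjection b⟫ = ⟪K.starProjection a, b⟫ := by
    rw [← inner_starProjection_left_eq_right,
      starProjection_eq_self_iff.mpr (K.starProjection_apply_mem a)]
  rw [h, h, ← inner_add_left, starProjection_add_starProjection_orthogonal]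

end Submodule

variable (J : V →ₗ[ℝ] V) (W : Submodule ℝ V) [W.HasOrthogonalProjection]

theorem inner_map_left_eq_neg_inner_map_right (hJinner : ∀ x y : V, ⟪J x, J y⟫ = ⟪x, y⟫)
    (hJ2 : ∀ x : V, J (J x) = -x) (x y : V) : ⟪J x, y⟫ = -⟪x, J y⟫ := by
  rw [← hJinner x (J y), hJ2, inner_neg_right, neg_neg]

theorem inner_starProjection_map_of_slant (hJskew : ∀ x y : V, ⟪J x, y⟫ = -⟪x, J y⟫) {c : ℝ}
    (hslant : ∀ x ∈ W, W.starProjection (J (W.starProjection (J x))) = -c • x)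
    {x y : V} (hx : x ∈ W) (hy : y ∈ W) :
    ⟪W.starProjection (J x), W.starProjection (J y)⟫ = c * ⟪x, y⟫ :=
  calc ⟪W.starProjection (J x), W.starProjection (J y)⟫
      = ⟪J x, W.starProjection (J y)⟫ := by
        rw [W.inner_starProjection_left_eq_right,
          W.starProjection_eq_self_iff.mpr (W.starProjection_apply_mem _)]
    _ = -⟪x, W.starProjection (J (W.starProjection (J y)))⟫ := by
        rw [hJskew, ← W.inner_starProjection_left_eq_right, W.starProjection_eq_self_iff.mpr hx]
    _ = c * ⟪x, y⟫ := by rw [hslant y hy, real_inner_smul_right]; ring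

theorem inner_starProjection_orthogonal_map_of_slant (hJinner : ∀ x y : V, ⟪J x, J y⟫ = ⟪x, y⟫)
    (hJskew : ∀ x y : V, ⟪J x, y⟫ = -⟪x, J y⟫) {c : ℝ}
    (hslant : ∀ x ∈ W, W.starProjection (J (W.starProjection (J x))) = -c • x)
    {x y : V} (hx : x ∈ W) (hy : y ∈ W) :
    ⟪Wᗮ.starProjection (J x), Wᗮ.starProjection (J y)⟫ = (1 - c) * ⟪x, y⟫ := by
  have := W.inner_eq_inner_starProjection_add_inner_starProjection_orthogonal (J x) (J y)
  rw [hJinner, inner_starProjection_map_of_slant J W hJskew hslant hx hy] at this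
  linarith

theorem starProjection_orthogonal_map_starProjection_orthogonal_map
    (hJ2 : ∀ x : V, J (J x) = -x) {x : V} (hx : x ∈ W) :
    Wᗮ.starProjection (J (Wᗮ.starProjection (J x))) =
      -Wᗮ.starProjection (J (W.starProjection (J x))) := by
  have h := congrArg (fun v => Wᗮ.starProjection (J v))
    (W.starProjection_add_starProjection_orthogonal (J x))
  simp only [map_add, hJ2, map_neg, W.starProjection_orthogonal_apply_eq_zero hx, neg_zero] at h
  exact eq_neg_of_add_eq_zero_right h

end

theorem pointwise_lemma53_general
    {V : Type*} [NormedAddCommGroup V] [InnerProductSpace ℝ V] [FiniteDimensional ℝ V]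
    (J : V →ₗ[ℝ] V) (hJinner : ∀ x y : V, ⟪J x, J y⟫ = ⟪x, y⟫)
    (hJ2 : ∀ x : V, J (J x) = -x)
    (W : Submodule ℝ V)
    (P : W → W) (F : W → Wᗮ) (C : Wᗮ → Wᗮ)
    (hPdef : ∀ x : W, P x = Submodule.orthogonalProjectionOnto W (J x))
    (hFdef : ∀ x : W, F x = Submodule.orthogonalProjectionOnto Wᗮ (J x))
    (hCdef : ∀ u : Wᗮ, C u = Submodule.orthogonalProjectionOnto Wᗮ (J u))
    (θ : ℝ)
    (hslant : ∀ x : W, P (P x) = -(Real.cos θ ^ 2) • x)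
    (hFsurj : ∀ u : Wᗮ, ∃ x : W, F x = u) :
    ∀ u v : Wᗮ, ⟪C u, C v⟫ = Real.cos θ ^ 2 * ⟪u, v⟫ := by
  have hJskew := inner_map_left_eq_neg_inner_map_right J hJinner hJ2
  have hP (x : W) : (P x : V) = W.starProjection (J x) := by rw [hPdef]; rfl
  have hF (x : W) : (F x : V) = Wᗮ.starProjection (J x) := by rw [hFdef]; rfl
  have hC (u : Wᗮ) : (C u : V) = Wᗮ.starProjection (J u) := by rw [hCdef]; rfl
  have hslantV : ∀ x ∈ W, W.starProjection (J (W.starProjection (J x))) = -(Real.cos θ ^ 2) • x :=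
    fun x hx => by simpa only [hP, Submodule.coe_smul] using congrArg Subtype.val (hslant ⟨x, hx⟩)
  have hCF (x : W) : (C (F x) : V) = -Wᗮ.starProjection (J (W.starProjection (J x))) := by
    rw [hC, hF, starProjection_orthogonal_map_starProjection_orthogonal_map J W hJ2 x.2]
  have hPW (x : W) : W.starProjection (J x) ∈ W := W.starProjection_apply_mem _
  intro u v
  obtain ⟨x, rfl⟩ := hFsurj u
  obtain ⟨y, rfl⟩ := hFsurj v
  rw [Submodule.coe_inner, Submodule.coe_inner, hCF, hCF, inner_neg_neg, hF, hF,
    inner_starProjection_orthogonal_map_of_slant J W hJinner hJskew hslantV (hPW x) (hPW y),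
    inner_starProjection_orthogonal_map_of_slant J W hJinner hJskew hslantV x.2 y.2,
    inner_starProjection_map_of_slant J W hJskew hslantV x.2 y.2]
  ring

/-- **Lemma 5.3 (pointwise form).** In the pointwise model of a `θ`-slant proper submanifold of
a quaternionic Kähler manifold, if moreover every normal vector lies in the range of `F`
(minimal codimension), then `⟪Cu, Cv⟫ = cos²θ · ⟪u, v⟫` for all `u, v ∈ W^⊥`. -/
theorem pointwise_lemma53
    {V : Type*} [NormedAddCommGroup V] [InnerProductSpace ℝ V] [FiniteDimensional ℝ V]
    (J : V →ₗ[ℝ] V) (hJinner : ∀ x y : V, ⟪J x, J y⟫ = ⟪x, y⟫)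
    (hJ2 : ∀ x : V, J (J x) = -x)
    (W : Submodule ℝ V)
    (P : W → W) (F : W → Wᗮ) (B : Wᗮ → W) (C : Wᗮ → Wᗮ)
    (hPdef : ∀ x : W, P x = Submodule.orthogonalProjectionOnto W (J x))
    (hFdef : ∀ x : W, F x = Submodule.orthogonalProjectionOnto Wᗮ (J x))
    (hBdef : ∀ u : Wᗮ, B u = Submodule.orthogonalProjectionOnto W (J u))
    (hCdef : ∀ u : Wᗮ, C u = Submodule.orthogonalProjectionOnto Wᗮ (J u))
    (θ : ℝ) (hθ : θ ∈ Set.Ioo 0 (Real.pi / 2))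
    (hslant : ∀ x : W, P (P x) = -(Real.cos θ ^ 2) • x)
    (hFsurj : ∀ u : Wᗮ, ∃ x : W, F x = u) :
    ∀ u v : Wᗮ, ⟪C u, C v⟫ = Real.cos θ ^ 2 * ⟪u, v⟫ :=
  pointwise_lemma53_general J hJinner hJ2 W P F C hPdef hFdef hCdef θ hslant hFsurj
end

section
/- (Lemma 5.4, pointwise form) With the pointwise model of a submanifold of a quaternionic Kähler manifold below, assume P ∘ P = −cos²θ · id_W for some θ ∈ (0, π/2) (the proper slant condition), that every vector of W^⊥ lies in the range of F (minimal codimension), and let h : W × W → W^⊥ be a symmetric bilinear map (the second fundamental form at the point) satisfying the quaternionic slant condition ⟨h(x, z), Fy⟩ = ⟨h(x, y), Fz⟩ for all x, y, z ∈ W (i.e. A_{Fy} z = A_{Fz} y). Then B maps the orthogonal complement of the first normal space onto the relative null space: B({ u ∈ W^⊥ : ⟨h(x, y), u⟩ = 0 for all x, y ∈ W }) = { z ∈ W : h(z, y) = 0 for all y ∈ W }. -/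
open RealInnerProductSpace

/-!
Writing `J x = P x + F x` and applying `J` once more gives `P (P x) + B (F x) = -x`, so the slant
condition turns `B ∘ F` into multiplication by `-sin² θ ≠ 0`. The quaternionic slant condition and
the symmetry of `h` show that `F` carries the relative null space exactly onto the orthogonal
complement of the first normal space; as `F` is onto, that complement is the `F`-image of the null
space, and `B` maps it back onto the null space up to the invertible factor `-sin² θ`.
-/

section Projection

variable {V : Type*} [NormedAddCommGroup V] [InnerProductSpace ℝ V]
  (K : Submodule ℝ V) [K.HasOrthogonalProjection]

theorem Submodule.orthogonalProjectionOnto_apply_tangent_add_normal {J : V →ₗ[ℝ] V}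
    (hJ2 : ∀ x : V, J (J x) = -x) (x : K) :
    K.orthogonalProjectionOnto (J (K.orthogonalProjectionOnto (J x))) +
      K.orthogonalProjectionOnto (J (Kᗮ.orthogonalProjectionOnto (J x))) = -x := by
  have hsplit : (K.orthogonalProjectionOnto (J x) : V) + Kᗮ.orthogonalProjectionOnto (J x) = J x :=
    K.starProjection_add_starProjection_orthogonal (J x)
  rw [← map_add, ← map_add, hsplit, hJ2, map_neg,
    K.orthogonalProjectionOnto_mem_subspace_eq_self x]

end Projection

section SecondFundamentalForm

variable {E N : Type*} [AddCommGroup E] [Module ℝ E] [NormedAddCommGroup N] [InnerProductSpace ℝ N]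
  {h : E →ₗ[ℝ] E →ₗ[ℝ] N} {F : E → N}

theorem forall_apply_eq_zero_iff_forall_inner_eq_zero (hsymm : ∀ x y, h x y = h y x)
    (hqslant : ∀ x y z, ⟪h x z, F y⟫ = ⟪h x y, F z⟫) (hF : Function.Surjective F) (z : E) :
    (∀ y, h z y = 0) ↔ ∀ x y, ⟪h x y, F z⟫ = 0 := by
  constructor
  · intro hz x y
    rw [← hqslant, hsymm, hz, inner_zero_left]
  · intro hFz y
    obtain ⟨w, hw⟩ := hF (h z y)
    have : ⟪h z y, F w⟫ = 0 := by rw [hsymm, hqslant, hFz]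
    rwa [hw, inner_self_eq_zero] at this

theorem smul_image_setOf_forall_apply_eq_zero {c : ℝ} (hc : c ≠ 0) :
    (c • ·) '' {z : E | ∀ y, h z y = 0} = {z : E | ∀ y, h z y = 0} := by
  ext z
  constructor
  · rintro ⟨x, hx, rfl⟩ y
    simp only [map_smul, LinearMap.smul_apply, hx y, smul_zero]
  · intro hz
    refine ⟨c⁻¹ • z, fun y => ?_, smul_inv_smul₀ hc z⟩
    simp only [map_smul, LinearMap.smul_apply, hz y, smul_zero]

theorem image_setOf_forall_inner_eq_zero {B : N → E} {c : ℝ} (hc : c ≠ 0)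
    (hBF : ∀ x, B (F x) = c • x) (hsymm : ∀ x y, h x y = h y x)
    (hqslant : ∀ x y z, ⟪h x z, F y⟫ = ⟪h x y, F z⟫) (hF : Function.Surjective F) :
    B '' {u : N | ∀ x y, ⟪h x y, u⟫ = 0} = {z : E | ∀ y, h z y = 0} := by
  have hpre : F ⁻¹' {u : N | ∀ x y, ⟪h x y, u⟫ = 0} = {z : E | ∀ y, h z y = 0} :=
    Set.ext fun z => (forall_apply_eq_zero_iff_forall_inner_eq_zero hsymm hqslant hF z).symm
  rw [← Set.image_preimage_eq {u : N | ∀ x y, ⟪h x y, u⟫ = 0} hF, hpre, Set.image_image, funext hBF,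
    smul_image_setOf_forall_apply_eq_zero hc]

end SecondFundamentalForm

theorem pointwise_lemma54_general
    {V : Type*} [NormedAddCommGroup V] [InnerProductSpace ℝ V] [FiniteDimensional ℝ V]
    (J : V →ₗ[ℝ] V)
    (hJ2 : ∀ x : V, J (J x) = -x)
    (W : Submodule ℝ V)
    (P : W → W) (F : W → Wᗮ) (B : Wᗮ → W)
    (hPdef : ∀ x : W, P x = Submodule.orthogonalProjectionOnto W (J x))
    (hFdef : ∀ x : W, F x = Submodule.orthogonalProjectionOnto Wᗮ (J x))
    (hBdef : ∀ u : Wᗮ, B u = Submodule.orthogonalProjectionOnto W (J u))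
    (θ : ℝ) (hθ : θ ∈ Set.Ioo 0 (Real.pi / 2))
    (hslant : ∀ x : W, P (P x) = -(Real.cos θ ^ 2) • x)
    (hFsurj : ∀ u : Wᗮ, ∃ x : W, F x = u)
    (h : W →ₗ[ℝ] W →ₗ[ℝ] Wᗮ) (hsymm : ∀ x y : W, h x y = h y x)
    (hqslant : ∀ x y z : W, ⟪h x z, F y⟫ = ⟪h x y, F z⟫) :
    B '' {u : Wᗮ | ∀ x y : W, ⟪h x y, u⟫ = 0} = {z : W | ∀ y : W, h z y = 0} := by
  have hsin : Real.sin θ ^ 2 ≠ 0 :=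
    pow_ne_zero _ (Real.sin_pos_of_pos_of_lt_pi hθ.1 (by linarith [hθ.2, Real.pi_pos])).ne'
  have hBF : ∀ x : W, B (F x) = -(Real.sin θ ^ 2) • x := by
    intro x
    have hsum := W.orthogonalProjectionOnto_apply_tangent_add_normal hJ2 x
    rw [← hPdef, ← hPdef, ← hFdef, ← hBdef, hslant] at hsum
    rw [Real.sin_sq, eq_neg_add_of_add_eq hsum]
    module
  exact image_setOf_forall_inner_eq_zero (neg_ne_zero.mpr hsin) hBF hsymm hqslant hFsurj

/-- **Lemma 5.4 (pointwise form).** In the pointwise model of a quaternionic slant submanifold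
of a quaternionic Kähler manifold of minimal codimension, `B` maps the orthogonal complement of
the first normal space onto the relative null space:
`B({ u : ⟪h(x,y), u⟫ = 0 ∀ x y }) = { z : h(z, ·) = 0 }`. -/
theorem pointwise_lemma54
    {V : Type*} [NormedAddCommGroup V] [InnerProductSpace ℝ V] [FiniteDimensional ℝ V]
    (J : V →ₗ[ℝ] V) (hJinner : ∀ x y : V, ⟪J x, J y⟫ = ⟪x, y⟫)
    (hJ2 : ∀ x : V, J (J x) = -x)
    (W : Submodule ℝ V)
    (P : W → W) (F : W → Wᗮ) (B : Wᗮ → W) (C : Wᗮ → Wᗮ)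
    (hPdef : ∀ x : W, P x = Submodule.orthogonalProjectionOnto W (J x))
    (hFdef : ∀ x : W, F x = Submodule.orthogonalProjectionOnto Wᗮ (J x))
    (hBdef : ∀ u : Wᗮ, B u = Submodule.orthogonalProjectionOnto W (J u))
    (hCdef : ∀ u : Wᗮ, C u = Submodule.orthogonalProjectionOnto Wᗮ (J u))
    (θ : ℝ) (hθ : θ ∈ Set.Ioo 0 (Real.pi / 2))
    (hslant : ∀ x : W, P (P x) = -(Real.cos θ ^ 2) • x)
    (hFsurj : ∀ u : Wᗮ, ∃ x : W, F x = u)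
    (h : W →ₗ[ℝ] W →ₗ[ℝ] Wᗮ) (hsymm : ∀ x y : W, h x y = h y x)
    (hqslant : ∀ x y z : W, ⟪h x z, F y⟫ = ⟪h x y, F z⟫) :
    B '' {u : Wᗮ | ∀ x y : W, ⟪h x y, u⟫ = 0} = {z : W | ∀ y : W, h z y = 0} :=
  pointwise_lemma54_general J hJ2 W P F B hPdef hFdef hBdef θ hθ hslant hFsurj h hsymm hqslant
end

section
/- (Inequality (26)) Let n ≥ 2 and 2 ≤ k ≤ n be integers, Θ ∈ ℝ, and let K : Fin n → Fin n → ℝ be a symmetric function (K i j = K j i). Assume that for every subset S ⊆ Fin n with |S| = k and every i ∈ S one has Σ_{j ∈ S, j ≠ i} K i j ≥ (k−1)·Θ. Then Σ_{i<j} K i j ≥ (n(n−1)/2)·Θ. -/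
open Finset

/-- Counting: the number of `k`-subsets of `Fin n` containing two fixed distinct
elements is `(n-2).choose (k-2)`. -/
lemma count_ksubsets_containing_pair (n k : ℕ) (hk2 : 2 ≤ k) (i j : Fin n) (hij : i ≠ j) :
    ((Finset.univ.powersetCard k).filter (fun S => i ∈ S ∧ j ∈ S)).card
      = (n-2).choose (k-2) := by
  have hcard : ((Finset.univ.erase i).erase j).card = n - 2 := by
    rw [card_erase_of_mem (by simp [hij.symm]), card_erase_of_mem (by simp), card_univ,
      Fintype.card_fin]
    omega
  rw [← hcard, ← Finset.card_powersetCard]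
  apply Finset.card_bij (fun S _ => (S.erase i).erase j)
  · intro S hS
    simp only [mem_filter, Finset.mem_powersetCard] at hS ⊢
    obtain ⟨⟨hsub, hScard⟩, hiS, hjS⟩ := hS
    refine ⟨?_, ?_⟩
    · intro x hx
      simp only [mem_erase] at hx ⊢
      exact ⟨hx.1, hx.2.1, mem_univ x⟩
    · rw [card_erase_of_mem (by simp [hjS, hij.symm]), card_erase_of_mem hiS, hScard]
      omega
  · intro S₁ hS₁ S₂ hS₂ h
    simp only [mem_filter] at hS₁ hS₂
    have e1 : ∀ S : Finset (Fin n), i ∈ S → j ∈ S →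
        insert i (insert j ((S.erase i).erase j)) = S := by
      intro S hi hj
      rw [Finset.insert_erase (by simp [hj, hij.symm]), Finset.insert_erase hi]
    rw [← e1 S₁ hS₁.2.1 hS₁.2.2, ← e1 S₂ hS₂.2.1 hS₂.2.2, h]
  · intro T hT
    simp only [Finset.mem_powersetCard] at hT
    have hiT : i ∉ T := fun h => by simpa using (hT.1 h)
    have hjT : j ∉ T := fun h => by simpa [hij.symm] using (hT.1 h)
    refine ⟨insert i (insert j T), ?_, ?_⟩
    · simp only [mem_filter, Finset.mem_powersetCard]
      refine ⟨⟨fun x _ => mem_univ x, ?_⟩, by simp, by simp⟩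
      rw [card_insert_of_notMem (by simp [hij, hiT]), card_insert_of_notMem hjT, hT.2]
      omega
    · rw [Finset.erase_insert (by simp [hij, hiT]), Finset.erase_insert hjT]

/-- Binomial identity: `C(n,k)·k·(k-1) = n·(n-1)·C(n-2,k-2)` for `2 ≤ k`, `2 ≤ n`. -/
lemma choose_mul_identity (m l : ℕ) :
    (m+2).choose (l+2) * ((l+2)*(l+1)) = (m+2) * ((m+1) * m.choose l) := by
  have h1 := Nat.add_one_mul_choose_eq m l
  have h2 := Nat.add_one_mul_choose_eq (m+1) (l+1)
  calc (m+2).choose (l+2) * ((l+2)*(l+1)) = ((m+2).choose (l+2) * (l+2)) * (l+1) := by ring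
    _ = ((m+2) * (m+1).choose (l+1)) * (l+1) := by rw [← h2]
    _ = (m+2) * ((m+1).choose (l+1) * (l+1)) := by ring
    _ = (m+2) * ((m+1) * m.choose l) := by rw [← h1]

/-- **Inequality (26).** If every `k`-Ricci curvature formed from the basis is bounded below by
`(k−1)·Θ`, then the scalar curvature satisfies `τ = Σ_{i<j} K_{ij} ≥ (n(n−1)/2)·Θ`. -/
theorem scalarCurvature_ge_of_kRicci_lower_bound
    (n k : ℕ) (hn : 2 ≤ n) (hk2 : 2 ≤ k) (hkn : k ≤ n) (Θ : ℝ)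
    (K : Fin n → Fin n → ℝ) (hsym : ∀ i j, K i j = K j i)
    (hbound : ∀ S : Finset (Fin n), S.card = k → ∀ i ∈ S,
      ∑ j ∈ S.erase i, K i j ≥ ((k : ℝ) - 1) * Θ) :
    ∑ p ∈ Finset.univ.filter (fun p : Fin n × Fin n => p.1 < p.2), K p.1 p.2
      ≥ (n * ((n : ℝ) - 1) / 2) * Θ := by
  classical
  set P : Finset (Fin n × Fin n) := Finset.univ.filter (fun p => p.1 < p.2) with hP
  set Q : Finset (Fin n × Fin n) := Finset.univ.filter (fun p => p.1 ≠ p.2) with hQ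
  -- Step A: per-subset bound on the ordered-pair sum
  have hA : ∀ S ∈ Finset.univ.powersetCard k,
      (k : ℝ) * ((k : ℝ) - 1) * Θ
        ≤ ∑ p ∈ (S ×ˢ S).filter (fun p => p.1 ≠ p.2), K p.1 p.2 := by
    intro S hS
    rw [Finset.mem_powersetCard] at hS
    have hd : ∑ p ∈ (S ×ˢ S).filter (fun p => p.1 ≠ p.2), K p.1 p.2
        = ∑ i ∈ S, ∑ j ∈ S.erase i, K i j := by
      rw [Finset.sum_filter, Finset.sum_product]
      refine Finset.sum_congr rfl fun i _ => ?_
      rw [← Finset.filter_ne', Finset.sum_filter]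
      exact Finset.sum_congr rfl fun j _ => by simp [ne_comm]
    rw [hd]
    calc (k : ℝ) * ((k : ℝ) - 1) * Θ = ∑ _i ∈ S, ((k : ℝ) - 1) * Θ := by
          rw [Finset.sum_const, hS.2, nsmul_eq_mul]; ring
      _ ≤ ∑ i ∈ S, ∑ j ∈ S.erase i, K i j :=
          Finset.sum_le_sum fun i hi => hbound S hS.2 i hi
  -- Step B: double counting
  have hB : ∑ S ∈ Finset.univ.powersetCard k,
        ∑ p ∈ (S ×ˢ S).filter (fun p => p.1 ≠ p.2), K p.1 p.2
      = ((n-2).choose (k-2) : ℝ) * ∑ p ∈ Q, K p.1 p.2 := by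
    have hfe : ∀ S : Finset (Fin n), (S ×ˢ S).filter (fun p => p.1 ≠ p.2)
        = Q.filter (fun p => p.1 ∈ S ∧ p.2 ∈ S) := by
      intro S
      ext p
      simp only [hQ, mem_filter, Finset.mem_product, mem_univ, true_and]
      tauto
    calc ∑ S ∈ Finset.univ.powersetCard k,
          ∑ p ∈ (S ×ˢ S).filter (fun p => p.1 ≠ p.2), K p.1 p.2
        = ∑ S ∈ Finset.univ.powersetCard k, ∑ p ∈ Q,
            if p.1 ∈ S ∧ p.2 ∈ S then K p.1 p.2 else 0 := by
          refine Finset.sum_congr rfl fun S _ => ?_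
          rw [hfe S, Finset.sum_filter]
      _ = ∑ p ∈ Q, ∑ S ∈ Finset.univ.powersetCard k,
            if p.1 ∈ S ∧ p.2 ∈ S then K p.1 p.2 else 0 := Finset.sum_comm
      _ = ∑ p ∈ Q, ((n-2).choose (k-2) : ℝ) * K p.1 p.2 := by
          refine Finset.sum_congr rfl fun p hp => ?_
          have hpne : p.1 ≠ p.2 := by simpa [hQ] using hp
          rw [← Finset.sum_filter, Finset.sum_const,
            count_ksubsets_containing_pair n k hk2 p.1 p.2 hpne, nsmul_eq_mul]
      _ = ((n-2).choose (k-2) : ℝ) * ∑ p ∈ Q, K p.1 p.2 := by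
          rw [Finset.mul_sum]
  -- Step C: sum the per-subset bound
  have hC : (n.choose k : ℝ) * ((k : ℝ) * ((k : ℝ) - 1) * Θ)
      ≤ ((n-2).choose (k-2) : ℝ) * ∑ p ∈ Q, K p.1 p.2 := by
    rw [← hB]
    calc (n.choose k : ℝ) * ((k : ℝ) * ((k : ℝ) - 1) * Θ)
        = ∑ _S ∈ Finset.univ.powersetCard k, (k : ℝ) * ((k : ℝ) - 1) * Θ := by
          rw [Finset.sum_const, Finset.card_powersetCard, card_univ, Fintype.card_fin,
            nsmul_eq_mul]
      _ ≤ _ := Finset.sum_le_sum hA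
  -- Step D: unordered vs ordered pairs
  have hD : ∑ p ∈ Q, K p.1 p.2 = 2 * ∑ p ∈ P, K p.1 p.2 := by
    have hsplit : Q = P ∪ Finset.univ.filter (fun p : Fin n × Fin n => p.2 < p.1) := by
      rw [hP, hQ, ← Finset.filter_or]
      exact Finset.filter_congr fun p _ => by
        constructor
        · exact fun h => lt_or_gt_of_ne h
        · rintro (h | h) <;> [exact ne_of_lt h; exact (ne_of_lt h).symm]
    have hdisj : Disjoint P (Finset.univ.filter (fun p : Fin n × Fin n => p.2 < p.1)) := by
      rw [Finset.disjoint_left]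
      intro p hp hp'
      simp only [hP, mem_filter] at hp hp'
      exact absurd hp'.2 (not_lt_of_gt hp.2)
    have hswap : ∑ p ∈ Finset.univ.filter (fun p : Fin n × Fin n => p.2 < p.1), K p.1 p.2
        = ∑ p ∈ P, K p.1 p.2 := by
      refine Finset.sum_equiv (Equiv.prodComm (Fin n) (Fin n)) ?_ ?_
      · intro p; simp [hP]
      · intro p _; exact hsym p.1 p.2
    rw [hsplit, Finset.sum_union hdisj, hswap]
    ring
  -- Step E: arithmetic conclusion
  obtain ⟨m, rfl⟩ : ∃ m, n = m + 2 := ⟨n - 2, by omega⟩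
  obtain ⟨l, rfl⟩ : ∃ l, k = l + 2 := ⟨k - 2, by omega⟩
  have hid := choose_mul_identity m l
  have hidR : ((m+2).choose (l+2) : ℝ) * ((l+2 : ℝ) * ((l+2 : ℝ) - 1))
      = ((m+2 : ℝ) * ((m+2 : ℝ) - 1)) * ((m+2-2).choose (l+2-2) : ℝ) := by
    have : ((m+2).choose (l+2) * ((l+2)*(l+1)) : ℝ)
        = ((m+2) * ((m+1) * m.choose l) : ℝ) := by exact_mod_cast congrArg Nat.cast hid
    push_cast at this ⊢
    nlinarith [this]
  have hCpos : (0 : ℝ) < ((m+2-2).choose (l+2-2) : ℝ) := by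
    have : 0 < (m+2-2).choose (l+2-2) := Nat.choose_pos (by omega)
    exact_mod_cast this
  rw [hD] at hC
  set C2 : ℝ := ((m+2-2).choose (l+2-2) : ℝ)
  set τ : ℝ := ∑ p ∈ P, K p.1 p.2
  have key : C2 * (((m+2 : ℝ) * ((m+2 : ℝ) - 1)) * Θ) ≤ C2 * (2 * τ) := by
    calc C2 * (((m+2 : ℝ) * ((m+2 : ℝ) - 1)) * Θ)
        = ((m+2).choose (l+2) : ℝ) * ((l+2 : ℝ) * ((l+2 : ℝ) - 1) * Θ) := by
          rw [show ((m+2).choose (l+2) : ℝ) * ((l+2 : ℝ) * ((l+2 : ℝ) - 1) * Θ)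
              = (((m+2).choose (l+2) : ℝ) * ((l+2 : ℝ) * ((l+2 : ℝ) - 1))) * Θ by ring, hidR]
          ring
      _ ≤ C2 * (2 * τ) := by
          convert hC using 2
          push_cast
          ring
  have h2 : ((m+2 : ℝ) * ((m+2 : ℝ) - 1)) * Θ ≤ 2 * τ := le_of_mul_le_mul_left key hCpos
  have : ((m+2 : ℕ) : ℝ) = (m+2 : ℝ) := by push_cast; ring
  rw [ge_iff_le]
  push_cast
  linarith
end
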